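/- With the notation of the topological state derivative: if additionally $(\alpha_n)$ is a sequence in the box $\mathcal{B}_{a,b} = \{x \in \mathbf{R}^M : a \le x \le b\}$ converging to $\alpha \in \mathcal{B}_{a,b}$, and $\varepsilon_n \searrow 0$, then the solutions $U_{\varepsilon_n}^{(n)} \in L^p(\Omega)$ of $\int_\Omega U_{\varepsilon_n}^{(n)} v\, dx = \frac{1}{|\omega_{\varepsilon_n}|}\int_{\omega_{\varepsilon_n}} ((\alpha_n)_i - (\alpha_n)_j)\nabla z_v \cdot n\, dS$ converge weakly in $L^p(\Omega)$, $p \in [1,\frac{d}{d-1})$, to the unique $U$ with $\int_\Omega U v\, dx = (\alpha_i - \alpha_j)\nabla z_v(x_0)\cdot n(x_0)$ for all $v \in L^{p'}(\Omega)$. -/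

import Mathlib

open MeasureTheory ENNReal Filter Topology BoundedContinuousFunction

/-!
Testing `U_n` against `v` gives `((α_n)_i - (α_n)_j)` times the average of the continuous
function `∇z_v · n` over `ω_{ε_n}`. These sets contain `x₀` and their diameters tend to `0`,
so the averages converge to the value at `x₀`: the average of a function lies in every closed
ball around `(∇z_v · n)(x₀)` containing its values on the set.
-/

theorem Filter.Tendsto.smallSets_nhds_of_diam {ι α : Type*} [PseudoMetricSpace α]
    {l : Filter ι} {s : ι → Set α} {x₀ : α}
    (hdiam : Tendsto (fun i => Metric.diam (s i)) l (𝓝 0))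
    (hmem : ∀ᶠ i in l, x₀ ∈ s i) (hbdd : ∀ᶠ i in l, Bornology.IsBounded (s i)) :
    Tendsto s l (𝓝 x₀).smallSets :=
  ((tendsto_closedBall_smallSets x₀).comp hdiam).smallSets_mono <| by
    filter_upwards [hmem, hbdd] with i hx hb y hy
    exact Metric.dist_le_diam_of_mem hb hy hx

theorem ContinuousAt.tendsto_setAverage {ι α E : Type*} [TopologicalSpace α]
    [MeasurableSpace α] [NormedAddCommGroup E] [NormedSpace ℝ E] [CompleteSpace E]
    {μ : Measure α} {l : Filter ι} {f : α → E} {s : ι → Set α} {x₀ : α}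
    (hf : ContinuousAt f x₀) (hs : Tendsto s l (𝓝 x₀).smallSets)
    (hmeas : ∀ᶠ i in l, MeasurableSet (s i)) (hpos : ∀ᶠ i in l, μ (s i) ≠ 0)
    (hfin : ∀ᶠ i in l, μ (s i) ≠ ∞) (hint : ∀ᶠ i in l, IntegrableOn f (s i) μ) :
    Tendsto (fun i => ⨍ x in s i, f x ∂μ) l (𝓝 (f x₀)) := by
  refine Metric.nhds_basis_closedBall.tendsto_right_iff.2 fun δ hδ => ?_
  have hclose : ∀ᶠ i in l, ∀ y ∈ s i, f y ∈ Metric.closedBall (f x₀) δ :=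
    hs.eventually <| eventually_smallSets_forall.2 <|
      hf.eventually (Metric.closedBall_mem_nhds _ hδ)
  filter_upwards [hclose, hmeas, hpos, hfin, hint] with i hi hmi hposi hfini hinti
  exact (convex_closedBall _ _).set_average_mem Metric.isClosed_closedBall hposi hfini
    ((ae_restrict_iff' hmi).2 (Eventually.of_forall hi)) hinti

theorem stmt_9_general {Ω Γ : Type*} [MeasurableSpace Ω] [MetricSpace Γ] [CompactSpace Γ]
    [MeasurableSpace Γ] [OpensMeasurableSpace Γ]
    (μ : Measure Ω) (ν : Measure Γ) [IsFiniteMeasure ν]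
    (p p' : ℝ≥0∞) [Fact (1 ≤ p')]
    (T : Lp ℝ p' μ →L[ℝ] (Γ →ᵇ ℝ))
    (x₀ : Γ) (ω : ℝ → Set Γ)
    (hmem : ∀ ε > (0:ℝ), x₀ ∈ ω ε)
    (hmeas : ∀ ε > (0:ℝ), MeasurableSet (ω ε))
    (hpos : ∀ ε > (0:ℝ), 0 < ν (ω ε)) (hfin : ∀ ε > (0:ℝ), ν (ω ε) < ⊤)
    (hdiam : Tendsto (fun ε => Metric.diam (ω ε)) (𝓝[>] (0:ℝ)) (𝓝 0))
    (M : ℕ) (i j : Fin M)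
    (αn : ℕ → Fin M → ℝ) (α : Fin M → ℝ)
    (hαconv : ∀ k, Tendsto (fun n => αn n k) atTop (𝓝 (α k)))
    (εn : ℕ → ℝ) (hεpos : ∀ n, 0 < εn n) (hεlim : Tendsto εn atTop (𝓝 0))
    (U : ℕ → Lp ℝ p μ)
    (hU : ∀ n, ∀ v : Lp ℝ p' μ,
      ∫ x, U n x * v x ∂μ
        = (ν (ω (εn n))).toReal⁻¹ * ∫ y in ω (εn n), (αn n i - αn n j) * T v y ∂ν)
    (Ulim : Lp ℝ p μ)
    (hUlim : ∀ v : Lp ℝ p' μ, ∫ x, Ulim x * v x ∂μ = (α i - α j) * T v x₀) :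
    ∀ v : Lp ℝ p' μ,
      Tendsto (fun n => ∫ x, U n x * v x ∂μ) atTop (𝓝 (∫ x, Ulim x * v x ∂μ)) := by
  intro v
  have hεn : Tendsto εn atTop (𝓝[>] 0) :=
    tendsto_nhdsWithin_of_tendsto_nhds_of_eventually_within εn hεlim (.of_forall hεpos)
  have hshrink : Tendsto (fun n => ω (εn n)) atTop (𝓝 x₀).smallSets :=
    (hdiam.comp hεn).smallSets_nhds_of_diam (.of_forall fun n => hmem _ (hεpos n))
      (.of_forall fun _ => Metric.isBounded_of_compactSpace)
  have havg : Tendsto (fun n => ⨍ y in ω (εn n), T v y ∂ν) atTop (𝓝 (T v x₀)) :=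
    (T v).continuous.continuousAt.tendsto_setAverage hshrink
      (.of_forall fun n => hmeas _ (hεpos n)) (.of_forall fun n => (hpos _ (hεpos n)).ne')
      (.of_forall fun n => (hfin _ (hεpos n)).ne)
      (.of_forall fun _ => ((T v).integrable ν).integrableOn)
  have hUavg : ∀ n, ∫ x, U n x * v x ∂μ = (αn n i - αn n j) * ⨍ y in ω (εn n), T v y ∂ν := by
    intro n
    rw [hU n v, integral_const_mul, setAverage_eq, smul_eq_mul, Measure.real]
    ring
  simp_rw [hUavg, hUlim v]
  exact ((hαconv i).sub (hαconv j)).mul havg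

/-- Topological state derivative with varying control values: if `α_n` is a sequence in
the box `𝓑_{a,b} ⊂ ℝ^M` converging to `α ∈ 𝓑_{a,b}` and `ε_n ↘ 0`, then the solutions
`U_n` of `∫ U_n v = |ω_{ε_n}|⁻¹ ∫_{ω_{ε_n}} ((α_n)_i - (α_n)_j) ∇z_v·n dS` converge
weakly in `L^p(Ω)`, `p ∈ [1, d/(d-1))`, to the unique `U` with
`∫ U v = (α_i - α_j) ∇z_v(x₀)·n(x₀)` for all `v ∈ L^{p'}(Ω)`.  Setting as in the
topological state derivative theorem: `(Γ, ν)` models `∂Ω`, `T` models `v ↦ ∇z_v·n`. -/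
theorem stmt_9 {Ω Γ : Type*} [MeasurableSpace Ω] [MetricSpace Γ] [CompactSpace Γ]
    [MeasurableSpace Γ] [OpensMeasurableSpace Γ]
    (μ : Measure Ω) (ν : Measure Γ) [IsFiniteMeasure ν]
    (d : ℕ) (hd : 2 ≤ d)
    (p p' : ℝ≥0∞) (hp1 : 1 ≤ p) (hpd : p < (d : ℝ≥0∞) / ((d : ℝ≥0∞) - 1))
    (hconj : 1 / p + 1 / p' = 1) [Fact (1 ≤ p)] [Fact (1 ≤ p')]
    (T : Lp ℝ p' μ →L[ℝ] (Γ →ᵇ ℝ))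
    (x₀ : Γ) (ω : ℝ → Set Γ)
    (hmem : ∀ ε > (0:ℝ), x₀ ∈ ω ε)
    (hmeas : ∀ ε > (0:ℝ), MeasurableSet (ω ε))
    (hpos : ∀ ε > (0:ℝ), 0 < ν (ω ε)) (hfin : ∀ ε > (0:ℝ), ν (ω ε) < ⊤)
    (hdiam : Tendsto (fun ε => Metric.diam (ω ε)) (𝓝[>] (0:ℝ)) (𝓝 0))
    (M : ℕ) (a b : Fin M → ℝ) (i j : Fin M)
    (αn : ℕ → Fin M → ℝ) (α : Fin M → ℝ)
    (hαnbox : ∀ n k, a k ≤ αn n k ∧ αn n k ≤ b k)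
    (hαbox : ∀ k, a k ≤ α k ∧ α k ≤ b k)
    (hαconv : ∀ k, Tendsto (fun n => αn n k) atTop (𝓝 (α k)))
    (εn : ℕ → ℝ) (hεpos : ∀ n, 0 < εn n) (hεlim : Tendsto εn atTop (𝓝 0))
    (U : ℕ → Lp ℝ p μ)
    (hU : ∀ n, ∀ v : Lp ℝ p' μ,
      ∫ x, U n x * v x ∂μ
        = (ν (ω (εn n))).toReal⁻¹ * ∫ y in ω (εn n), (αn n i - αn n j) * T v y ∂ν)
    (Ulim : Lp ℝ p μ)
    (hUlim : ∀ v : Lp ℝ p' μ, ∫ x, Ulim x * v x ∂μ = (α i - α j) * T v x₀)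
    (hUuniq : ∀ U' : Lp ℝ p μ,
      (∀ v : Lp ℝ p' μ, ∫ x, U' x * v x ∂μ = (α i - α j) * T v x₀) → U' = Ulim) :
    ∀ v : Lp ℝ p' μ,
      Tendsto (fun n => ∫ x, U n x * v x ∂μ) atTop (𝓝 (∫ x, Ulim x * v x ∂μ)) :=
  stmt_9_general μ ν p p' T x₀ ω hmem hmeas hpos hfin hdiam M i j αn α hαconv εn hεpos hεlim U hU
    Ulim hUlim
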